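/- arXiv:1910.00241 — 3 statements merged into one kernel-verified Lean document; each statement's English description precedes it below -/
import Mathlib

section
/- (Soundness of the merging closure) Let G = (V,E) be a Σ_k-labeled bidirected graph with no ε-labeled edges, and let ∼ be the merging closure of G. For all nodes u, v ∈ V, if u ∼ v then u and v belong to the same DSCC of G. -/
/-- The Dyck alphabet `Σ_k`: `k` opening symbols `α_i` and `k` closing symbols `ᾱ_i`. -/
inductive DSym (k : ℕ) : Type
  | op (i : Fin k)
  | cl (i : Fin k)

/-- The Dyck language `𝓛_k`: the least set of words containing the empty word, closed
under concatenation and under wrapping with a matched pair of parentheses. -/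
inductive Dyck {k : ℕ} : List (DSym k) → Prop
  | nil : Dyck []
  | concat {w₁ w₂ : List (DSym k)} : Dyck w₁ → Dyck w₂ → Dyck (w₁ ++ w₂)
  | wrap {w : List (DSym k)} (i : Fin k) : Dyck w → Dyck (DSym.op i :: (w ++ [DSym.cl i]))


/-- `PathLabel E u v w` : there is a path from `u` to `v` in the `Σ_k`-labeled graph with
edge relation `E` (no ε-labeled edges), whose label is `w`. -/
inductive PathLabel {V : Type} {k : ℕ} (E : V → V → DSym k → Prop) :
    V → V → List (DSym k) → Prop
  | refl (u : V) : PathLabel E u u []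
  | step {u v w : V} {a : DSym k} {s : List (DSym k)} :
      E u v a → PathLabel E v w s → PathLabel E u w (a :: s)

/-- `v` is Dyck-reachable from `u`. -/
def DyckReach {V : Type} {k : ℕ} (E : V → V → DSym k → Prop) (u v : V) : Prop :=
  ∃ w, PathLabel E u v w ∧ Dyck w

/-- A `Σ_k`-labeled graph without ε-edges is bidirected if each `α_i`-labeled edge is
matched by a reverse `ᾱ_i`-labeled edge. -/
def Bidirected {V : Type} {k : ℕ} (E : V → V → DSym k → Prop) : Prop :=
  ∀ u v (i : Fin k), E u v (DSym.op i) ↔ E v u (DSym.cl i)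

/-- The merging closure of `G`: the least equivalence relation `∼` on the nodes such
that whenever `x ∼ y`, `(x,u,ᾱ_i) ∈ E` and `(y,v,ᾱ_i) ∈ E`, also `u ∼ v`. -/
inductive MergeClosure {V : Type} {k : ℕ} (E : V → V → DSym k → Prop) : V → V → Prop
  | refl (u : V) : MergeClosure E u u
  | symm {u v : V} : MergeClosure E u v → MergeClosure E v u
  | trans {u v w : V} : MergeClosure E u v → MergeClosure E v w → MergeClosure E u w
  | merge {x y u v : V} (i : Fin k) : MergeClosure E x y →
      E x u (DSym.cl i) → E y v (DSym.cl i) → MergeClosure E u v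


lemma PathLabel.append {V : Type} {k : ℕ} {E : V → V → DSym k → Prop}
    {u v w : V} {s t : List (DSym k)} (h1 : PathLabel E u v s)
    (h2 : PathLabel E v w t) : PathLabel E u w (s ++ t) := by
  induction h1 with
  | refl => simpa
  | step e _ ih => exact PathLabel.step e (ih h2)

lemma DyckReach.trans' {V : Type} {k : ℕ} {E : V → V → DSym k → Prop}
    {u v w : V} (h1 : DyckReach E u v) (h2 : DyckReach E v w) : DyckReach E u w := by
  obtain ⟨s, hs, hds⟩ := h1
  obtain ⟨t, ht, hdt⟩ := h2
  exact ⟨s ++ t, hs.append ht, hds.concat hdt⟩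

/-- Soundness of the merging closure: on a bidirected graph (without ε-edges),
nodes related by the merging closure belong to the same DSCC. -/
theorem mergeClosure_sound {V : Type} {k : ℕ} (hk : 1 ≤ k)
    (E : V → V → DSym k → Prop) (hbi : Bidirected E)
    {u v : V} (h : MergeClosure E u v) :
    DyckReach E u v ∧ DyckReach E v u := by
  induction h with
  | refl u => exact ⟨⟨[], PathLabel.refl u, Dyck.nil⟩, ⟨[], PathLabel.refl u, Dyck.nil⟩⟩
  | symm _ ih => exact ⟨ih.2, ih.1⟩
  | trans _ _ ih1 ih2 => exact ⟨ih1.1.trans' ih2.1, ih2.2.trans' ih1.2⟩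
  | @merge x y a b i _ hx hy ih =>
    have hxa : E a x (DSym.op i) := (hbi a x i).mpr hx
    have hyb : E b y (DSym.op i) := (hbi b y i).mpr hy
    obtain ⟨⟨s, hs, hds⟩, ⟨t, ht, hdt⟩⟩ := ih
    refine ⟨⟨DSym.op i :: (s ++ [DSym.cl i]), ?_, hds.wrap i⟩,
            ⟨DSym.op i :: (t ++ [DSym.cl i]), ?_, hdt.wrap i⟩⟩
    · exact PathLabel.step hxa (hs.append (PathLabel.step hy (PathLabel.refl b)))
    · exact PathLabel.step hyb (ht.append (PathLabel.step hx (PathLabel.refl a)))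
end

section
/- (Completeness of the merging closure) Let G = (V,E) be a Σ_k-labeled bidirected graph with no ε-labeled edges, and let ∼ be the merging closure of G. For all nodes u, v ∈ V, if v is Dyck-reachable from u then u ∼ v. -/
lemma pathLabel_append_split {V : Type} {k : ℕ} {E : V → V → DSym k → Prop}
    {u v : V} {w₁ w₂ : List (DSym k)} (h : PathLabel E u v (w₁ ++ w₂)) :
    ∃ m, PathLabel E u m w₁ ∧ PathLabel E m v w₂ := by
  induction w₁ generalizing u with
  | nil => exact ⟨u, PathLabel.refl u, h⟩
  | cons a t ih =>
    cases h with
    | step he hp =>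
      obtain ⟨m, h1, h2⟩ := ih hp
      exact ⟨m, PathLabel.step he h1, h2⟩

lemma pathLabel_singleton {V : Type} {k : ℕ} {E : V → V → DSym k → Prop}
    {u v : V} {a : DSym k} (h : PathLabel E u v [a]) : E u v a := by
  cases h with
  | step he hp => cases hp; exact he

lemma dyck_path_merge {V : Type} {k : ℕ} {E : V → V → DSym k → Prop}
    (hbi : Bidirected E) {w : List (DSym k)} (hd : Dyck w) :
    ∀ u v, PathLabel E u v w → MergeClosure E u v := by
  induction hd with
  | nil => intro u v h; cases h; exact MergeClosure.refl u
  | concat h1 h2 ih1 ih2 =>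
    intro u v h
    obtain ⟨m, hp1, hp2⟩ := pathLabel_append_split h
    exact MergeClosure.trans (ih1 u m hp1) (ih2 m v hp2)
  | wrap i hw ih =>
    intro u v h
    cases h with
    | step he hp =>
      obtain ⟨m, hp1, hp2⟩ := pathLabel_append_split hp
      exact MergeClosure.merge i (ih _ m hp1) ((hbi u _ i).mp he)
        (pathLabel_singleton hp2)

/-- Completeness of the merging closure: on a bidirected graph (without ε-edges),
Dyck-reachable nodes are related by the merging closure. -/
theorem mergeClosure_complete {V : Type} {k : ℕ} (hk : 1 ≤ k)
    (E : V → V → DSym k → Prop) (hbi : Bidirected E)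
    {u v : V} (h : DyckReach E u v) :
    MergeClosure E u v := by
  obtain ⟨w, hp, hd⟩ := h
  exact dyck_path_merge hbi hd u v hp
end

section
/- (Correctness of the union-graph reduction) Let X be a finite set and σ = ((x₁,y₁),…,(x_m,y_m)) a finite sequence of pairs of elements of X, and let G^σ be the union graph of σ. For all x, y ∈ X: x and y lie in the same class of the equivalence closure of the relation {(x_j, y_j) : 1 ≤ j ≤ m} on X if and only if x and y belong to the same DSCC of G^σ. -/
/-- Two nodes belong to the same DSCC iff each is Dyck-reachable from the other. -/
def SameDSCC {V : Type} {k : ℕ} (E : V → V → DSym k → Prop) (u v : V) : Prop :=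
  DyckReach E u v ∧ DyckReach E v u

/-- The union graph `G^σ` of a sequence `σ = ((x₁,y₁),…,(x_m,y_m))` of pairs of
elements of `X`: its nodes are `X` plus fresh nodes `z₁,…,z_m`, and for each `j` it has
the edges `(z_j, x_j, ᾱ)`, `(z_j, y_j, ᾱ)` and their bidirected counterparts
`(x_j, z_j, α)`, `(y_j, z_j, α)`. -/
def UnionGraphEdge {X : Type} {m : ℕ} (σ : Fin m → X × X) :
    (X ⊕ Fin m) → (X ⊕ Fin m) → DSym 1 → Prop := fun a b l =>
  (∃ j : Fin m, a = Sum.inr j ∧ (b = Sum.inl (σ j).1 ∨ b = Sum.inl (σ j).2) ∧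
      l = DSym.cl 0) ∨
  (∃ j : Fin m, b = Sum.inr j ∧ (a = Sum.inl (σ j).1 ∨ a = Sum.inl (σ j).2) ∧
      l = DSym.op 0)

lemma pathLabel_append {V : Type} {k : ℕ} {E : V → V → DSym k → Prop} :
    ∀ {w1 : List (DSym k)} {u v : V}, PathLabel E u v w1 →
      ∀ {t : V} {w2 : List (DSym k)}, PathLabel E v t w2 → PathLabel E u t (w1 ++ w2) := by
  intro w1 u v h1
  induction h1 with
  | refl u => intro t w2 h2; exact h2
  | step e h ih => intro t w2 h2; exact PathLabel.step e (ih h2)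

lemma dyckReach_refl {V : Type} {k : ℕ} (E : V → V → DSym k → Prop) (u : V) :
    DyckReach E u u := ⟨[], PathLabel.refl u, Dyck.nil⟩

lemma dyckReach_trans {V : Type} {k : ℕ} {E : V → V → DSym k → Prop} {u v t : V}
    (h1 : DyckReach E u v) (h2 : DyckReach E v t) : DyckReach E u t := by
  obtain ⟨w1, p1, d1⟩ := h1
  obtain ⟨w2, p2, d2⟩ := h2
  exact ⟨w1 ++ w2, pathLabel_append p1 p2, Dyck.concat d1 d2⟩

lemma reach_pair {X : Type} {m : ℕ} (σ : Fin m → X × X) (j : Fin m) (a b : X)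
    (ha : a = (σ j).1 ∨ a = (σ j).2) (hb : b = (σ j).1 ∨ b = (σ j).2) :
    DyckReach (UnionGraphEdge σ) (Sum.inl a) (Sum.inl b) := by
  refine ⟨[DSym.op 0, DSym.cl 0], ?_, Dyck.wrap 0 Dyck.nil⟩
  refine PathLabel.step (Or.inr ⟨j, rfl, ?_, rfl⟩)
    (PathLabel.step (Or.inl ⟨j, rfl, ?_, rfl⟩) (PathLabel.refl _))
  · rcases ha with h | h <;> simp [h]
  · rcases hb with h | h <;> simp [h]

lemma path_to_eqv {X : Type} {m : ℕ} (σ : Fin m → X × X) :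
    ∀ {w : List (DSym 1)} {u v : X ⊕ Fin m}, PathLabel (UnionGraphEdge σ) u v w →
      ∀ y : X, v = Sum.inl y →
        (∀ x : X, u = Sum.inl x →
            Relation.EqvGen (fun a b => ∃ j : Fin m, σ j = (a, b)) x y) ∧
        (∀ j : Fin m, u = Sum.inr j →
            Relation.EqvGen (fun a b => ∃ j : Fin m, σ j = (a, b)) (σ j).1 y ∧
            Relation.EqvGen (fun a b => ∃ j : Fin m, σ j = (a, b)) (σ j).2 y) := by
  intro w u v h
  induction h with
  | refl u =>
    intro y hv
    constructor
    · intro x hx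
      rw [hv] at hx
      cases Sum.inl.inj hx
      exact Relation.EqvGen.refl y
    · intro j hj; rw [hv] at hj; exact absurd hj (by simp)
  | @step u v' t a s e rest ih =>
    intro y hv
    have ih' := ih y hv
    have base : ∀ j : Fin m,
        Relation.EqvGen (fun a b => ∃ j : Fin m, σ j = (a, b)) (σ j).1 (σ j).2 :=
      fun j => Relation.EqvGen.rel _ _ ⟨j, rfl⟩
    rcases e with ⟨j, hu, hb, -⟩ | ⟨j, hv', hb, -⟩
    · constructor
      · intro x hx; rw [hu] at hx; exact absurd hx (by simp)
      · intro j' hj'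
        rw [hu] at hj'
        cases Sum.inr.inj hj'
        rcases hb with hb | hb
        · have h1 := ih'.1 _ hb
          exact ⟨h1, Relation.EqvGen.trans _ _ _ (Relation.EqvGen.symm _ _ (base j)) h1⟩
        · have h2 := ih'.1 _ hb
          exact ⟨Relation.EqvGen.trans _ _ _ (base j) h2, h2⟩
    · constructor
      · intro x hx
        have hj := ih'.2 j hv'
        rcases hb with hb | hb <;> rw [hb] at hx <;> cases Sum.inl.inj hx
        · exact hj.1
        · exact hj.2
      · intro j' hj'
        rcases hb with hb | hb <;> rw [hb] at hj' <;> exact absurd hj' (by simp)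

/-- Correctness of the union-graph reduction: two elements `x, y ∈ X` are in the same
class of the equivalence closure of the relation `{(x_j, y_j)}` iff they are in the
same DSCC of the union graph `G^σ`. -/
theorem unionGraph_correct {X : Type} [Fintype X] {m : ℕ} (σ : Fin m → X × X)
    (x y : X) :
    Relation.EqvGen (fun a b => ∃ j : Fin m, σ j = (a, b)) x y ↔
      SameDSCC (UnionGraphEdge σ) (Sum.inl x) (Sum.inl y) := by
  constructor
  · intro h
    induction h with
    | rel a b hab =>
      obtain ⟨j, hj⟩ := hab
      have h1 : a = (σ j).1 ∨ a = (σ j).2 := Or.inl (by rw [hj])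
      have h2 : b = (σ j).1 ∨ b = (σ j).2 := Or.inr (by rw [hj])
      exact ⟨reach_pair σ j a b h1 h2, reach_pair σ j b a h2 h1⟩
    | refl a => exact ⟨dyckReach_refl _ _, dyckReach_refl _ _⟩
    | symm a b _ ih => exact ⟨ih.2, ih.1⟩
    | trans a b c _ _ ih1 ih2 =>
      exact ⟨dyckReach_trans ih1.1 ih2.1, dyckReach_trans ih2.2 ih1.2⟩
  · rintro ⟨⟨w, p, -⟩, -⟩
    exact (path_to_eqv σ p y rfl).1 x rfl
end
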